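/- The system of equations a₀ + ((d₂+8)/(d₂+16))p = 1, a₀ = -(d₂(d₂+2)/(16d₁))a₁ + (d₂(d₂+2) - 2d₁(d₂+8))/(16 a₁ d₁) + (d₂+16)/8, 6a₀ - (d₂+2)a₁ + d₂ - 4 = 0 with (d₁, d₂) = (133, 112) has exactly two real solutions with a₁ ≠ 0: (a₀, a₁, p) = (1, 1, 0) and (a₀, a₁, p) = (-279/25, 9/25, 4864/375). -/

import Mathlib

/-!
Solving the linear third equation for `a₀` and clearing the denominators of the second leaves a
quadratic equation in `a₁`. For all `d₁, d₂` it has the root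
`a₁ = 1`, the Einstein solution; for `(d₁, d₂) = (133, 112)` its other root is `a₁ = 9 / 25`.
Then `a₀` and `p` are read off the third and the first equation.
-/

/-- Here `d₁ = dim k₁` and `d₂ = dim p₁`. -/
def QuasiEinsteinSystem {K : Type*} [Field K] (d₁ d₂ a₀ a₁ p : K) : Prop :=
  a₀ + ((d₂ + 8) / (d₂ + 16)) * p = 1 ∧
    a₀ = -((d₂ * (d₂ + 2)) / (16 * d₁)) * a₁ + (d₂ * (d₂ + 2) - 2 * d₁ * (d₂ + 8)) / (16 * a₁ * d₁)
      + (d₂ + 16) / 8 ∧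
    6 * a₀ - (d₂ + 2) * a₁ + d₂ - 4 = 0

section

variable {K : Type*} [Field K] [CharZero K] {d₁ d₂ a₀ a₁ p : K}

theorem quasiEinsteinSystem_iff (hd₁ : d₁ ≠ 0) (hd₂ : d₂ + 16 ≠ 0) (ha₁ : a₁ ≠ 0) :
    QuasiEinsteinSystem d₁ d₂ a₀ a₁ p ↔
      (a₁ - 1) * ((d₂ + 2) * (8 * d₁ + 3 * d₂) * a₁ + 3 * d₂ * (d₂ + 2) - 6 * d₁ * (d₂ + 8)) = 0 ∧
        6 * a₀ = (d₂ + 2) * a₁ - d₂ + 4 ∧ (d₂ + 8) * p = (d₂ + 16) * (1 - a₀) := by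
  have hsecond : a₀ = -((d₂ * (d₂ + 2)) / (16 * d₁)) * a₁
      + (d₂ * (d₂ + 2) - 2 * d₁ * (d₂ + 8)) / (16 * a₁ * d₁) + (d₂ + 16) / 8 ↔
      16 * d₁ * a₁ * a₀ = -d₂ * (d₂ + 2) * a₁ ^ 2 + d₂ * (d₂ + 2) - 2 * d₁ * (d₂ + 8)
        + 2 * d₁ * (d₂ + 16) * a₁ := by
    constructor <;> intro h
    · field_simp at h; linear_combination h / 8
    · field_simp; linear_combination 8 * h
  have hfirst : a₀ + ((d₂ + 8) / (d₂ + 16)) * p = 1 ↔ (d₂ + 8) * p = (d₂ + 16) * (1 - a₀) := by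
    constructor <;> intro h
    · field_simp at h; linear_combination h
    · field_simp; linear_combination h
  rw [QuasiEinsteinSystem, hfirst, hsecond]
  constructor
  · rintro ⟨hp, ha₀, hlin⟩
    exact ⟨by linear_combination 3 * ha₀ - 8 * d₁ * a₁ * hlin, by linear_combination hlin, hp⟩
  · rintro ⟨hquad, hlin, hp⟩
    exact ⟨hp, by linear_combination hquad / 3 + 8 * d₁ * a₁ / 3 * hlin, by linear_combination hlin⟩

end

/-- The m-quasi-Einstein system for E₈ with (d₁, d₂) = (133, 112) has exactly the two
solutions (a₀, a₁, p) = (1, 1, 0) and (a₀, a₁, p) = (-279 / 25, 9 / 25, 4864 / 375) with a₁ ≠ 0. -/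
theorem stmt19 (a₀ a₁ p : ℝ) (ha₁ : a₁ ≠ 0) :
    (a₀ + (((112 : ℝ) + 8) / (112 + 16)) * p = 1 ∧
      a₀ = -(((112 : ℝ) * (112 + 2)) / (16 * 133)) * a₁
            + ((112 : ℝ) * (112 + 2) - 2 * 133 * (112 + 8)) / (16 * a₁ * 133)
            + ((112 : ℝ) + 16) / 8 ∧
      6 * a₀ - ((112 : ℝ) + 2) * a₁ + 112 - 4 = 0) ↔
      ((a₀, a₁, p) = (1, 1, 0) ∨ (a₀, a₁, p) = (-279 / 25, 9 / 25, 4864 / 375)) := by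
  change QuasiEinsteinSystem (133 : ℝ) 112 a₀ a₁ p ↔ _
  rw [quasiEinsteinSystem_iff (by norm_num) (by norm_num) ha₁]
  simp only [Prod.mk.injEq]
  constructor
  · rintro ⟨hquad, hlin, hp⟩
    rcases mul_eq_zero.1 hquad with h | h
    · obtain rfl : a₁ = 1 := by linear_combination h
      obtain rfl : a₀ = 1 := by linear_combination hlin / 6
      exact Or.inl ⟨rfl, rfl, by linear_combination hp / 120⟩
    · obtain rfl : a₁ = 9 / 25 := by linear_combination h / 159600
      obtain rfl : a₀ = -279 / 25 := by linear_combination hlin / 6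
      exact Or.inr ⟨rfl, rfl, by linear_combination hp / 120⟩
  · rintro (⟨rfl, rfl, rfl⟩ | ⟨rfl, rfl, rfl⟩) <;> norm_num
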